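/- arXiv:2306.10523 — 3 statements merged into one kernel-verified Lean document; each statement's English description precedes it below -/
import Mathlib

section
/- Let σ = (i₁ i₂ … i_n) be an n-cycle in Sₙ (n ≥ 2) and T_σ its (n−1)×(n−1) adjacency matrix over 𝔽₂. Let α ∈ 𝔽₂^{n−1} be the indicator vector of the interval between i₁ and i₂, i.e., α_j = 1 iff min(i₁,i₂) ≤ j ≤ max(i₁,i₂) − 1. Then the vectors α, T_σα, T_σ²α, …, T_σ^{n−2}α are linearly independent over 𝔽₂. -/
/-- `convPerm σ A` is the set of integers between `min σ(A)` and `max σ(A)` inclusive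
(and `∅` if `A = ∅`). -/
def convPerm {N : ℕ} (σ : Equiv.Perm (Fin N)) (A : Finset (Fin N)) : Finset (Fin N) :=
  if h : A.Nonempty then
    Finset.Icc ((A.image σ).min' (h.image σ)) ((A.image σ).max' (h.image σ))
  else ∅

/-- `pairA i = {i, i+1}`, the 0-indexed version of `A_i = {i, i+1} ⊆ {1,…,n}`;
the ambient set `{1,…,n}` is modelled by `Fin (n+1)` and the index set `{1,…,n-1}` by `Fin n`. -/
def pairA {n : ℕ} (i : Fin n) : Finset (Fin (n + 1)) := {i.castSucc, i.succ}

/-- `σ` is a full cycle on its (finite) domain, i.e. an `N`-cycle in `S_N`. -/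
def IsNCycle {N : ℕ} (σ : Equiv.Perm (Fin N)) : Prop :=
  σ.IsCycle ∧ σ.support = Finset.univ

/-- The characteristic number `m_i = min {m ≥ 1 : (convσ)^m(A_i) ⊇ A_i}`. -/
noncomputable def charNum {n : ℕ} (σ : Equiv.Perm (Fin (n + 1))) (i : Fin n) : ℕ :=
  sInf {m : ℕ | 1 ≤ m ∧ pairA i ⊆ (convPerm σ)^[m] (pairA i)}

/-- The `n × n` adjacency matrix of `σ` over `𝔽₂`: `(T_σ)_{ij} = 1` iff `A_i ⊆ convσ(A_j)`. -/
def adjMat {n : ℕ} (σ : Equiv.Perm (Fin (n + 1))) : Matrix (Fin n) (Fin n) (ZMod 2) :=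
  Matrix.of fun i j => if pairA i ⊆ convPerm σ (pairA j) then 1 else 0





def eps (n : ℕ) (v : Fin (n+1)) : Fin n → ZMod 2 := fun j => if v ≤ j.castSucc then 1 else 0

lemma convPerm_pair {n : ℕ} (σ : Equiv.Perm (Fin (n+1))) (j : Fin n) :
    convPerm σ (pairA j) =
      Finset.Icc (min (σ j.castSucc) (σ j.succ)) (max (σ j.castSucc) (σ j.succ)) := by
  have hne : (pairA j).Nonempty := ⟨j.castSucc, by simp [pairA]⟩
  rw [convPerm, dif_pos hne]
  have himg : (pairA j).image σ = {σ j.castSucc, σ j.succ} := by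
    simp [pairA, Finset.image_insert]
  congr 1
  · rw [Finset.min'_eq_inf']
    simp [himg, Finset.inf'_insert, min_comm]
  · rw [Finset.max'_eq_sup']
    simp [himg, Finset.sup'_insert, max_comm]

lemma xor_order {α : Type*} [LinearOrder α] (a b c : α) :
    (min a b ≤ c ∧ c < max a b) ↔ Xor' (a ≤ c) (b ≤ c) := by
  constructor
  · rintro ⟨h1, h2⟩
    rw [min_le_iff] at h1; rw [lt_max_iff] at h2
    rcases h1 with h1 | h1
    · refine Or.inl ⟨h1, fun hb => ?_⟩
      rcases h2 with h2 | h2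
      · exact absurd h1 (not_le.2 h2)
      · exact absurd hb (not_le.2 h2)
    · refine Or.inr ⟨h1, fun ha => ?_⟩
      rcases h2 with h2 | h2
      · exact absurd ha (not_le.2 h2)
      · exact absurd h1 (not_le.2 h2)
  · rintro (⟨ha, hb⟩ | ⟨hb, ha⟩)
    · exact ⟨min_le_iff.2 (Or.inl ha), lt_max_iff.2 (Or.inr (not_le.1 hb))⟩
    · exact ⟨min_le_iff.2 (Or.inr hb), lt_max_iff.2 (Or.inl (not_le.1 ha))⟩

lemma pair_subset_Icc {n : ℕ} (i : Fin n) (a b : Fin (n+1)) :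
    pairA i ⊆ Finset.Icc (min a b) (max a b) ↔ Xor' (a ≤ i.castSucc) (b ≤ i.castSucc) := by
  rw [← xor_order]
  constructor
  · intro h
    have h1 := Finset.mem_Icc.1 (h (show i.castSucc ∈ pairA i by simp [pairA]))
    have h2 := Finset.mem_Icc.1 (h (show i.succ ∈ pairA i by simp [pairA]))
    exact ⟨h1.1, Fin.castSucc_lt_iff_succ_le.2 h2.2⟩
  · rintro ⟨h1, h2⟩
    intro y hy
    rw [pairA, Finset.mem_insert, Finset.mem_singleton] at hy
    rcases hy with rfl | rfl <;> rw [Finset.mem_Icc]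
    · exact ⟨h1, le_of_lt h2⟩
    · exact ⟨h1.trans (Fin.castSucc_lt_succ (i := i)).le, Fin.castSucc_lt_iff_succ_le.1 h2⟩

open Classical in
lemma ite_xor (P Q : Prop) [Decidable P] [Decidable Q] :
    (if Xor' P Q then (1 : ZMod 2) else 0) = (if P then 1 else 0) + (if Q then 1 else 0) := by
  by_cases hP : P <;> by_cases hQ : Q <;> simp [Xor', hP, hQ] <;> decide

lemma adjMat_apply {n : ℕ} (σ : Equiv.Perm (Fin (n+1))) (i j : Fin n) :
    adjMat σ i j = eps n (σ j.castSucc) i + eps n (σ j.succ) i := by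
  rw [adjMat, Matrix.of_apply, convPerm_pair]
  simp only [eps]
  rw [← ite_xor]
  congr 1
  simp [pair_subset_Icc]

lemma telescope {n : ℕ} (h : Fin (n+1) → ZMod 2) :
    ∑ j : Fin n, (h j.castSucc + h j.succ) = h 0 + h (Fin.last n) := by
  induction n with
  | zero => simp [Fin.last]; exact (CharTwo.add_self_eq_zero _).symm
  | succ n ih =>
    rw [Fin.sum_univ_castSucc]
    have : ∀ j : Fin n, h (j.castSucc).castSucc + h (j.castSucc).succ
        = (h ∘ Fin.castSucc) j.castSucc + (h ∘ Fin.castSucc) j.succ := by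
      intro j
      simp only [Function.comp_apply, Fin.succ_castSucc]
    rw [Finset.sum_congr rfl (fun j _ => this j), ih (h ∘ Fin.castSucc)]
    simp only [Function.comp_apply]
    rw [show ((0 : Fin (n+1)).castSucc) = 0 from rfl, Fin.succ_last]
    rw [add_assoc, ← add_assoc (h (Fin.last n).castSucc), CharTwo.add_self_eq_zero, zero_add]

lemma mulVec_eps {n : ℕ} (σ : Equiv.Perm (Fin (n+1))) (v : Fin (n+1)) :
    (adjMat σ).mulVec (eps n v) =
      fun i => eps n (σ v) i + eps n (σ (Fin.last n)) i := by
  funext i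
  rw [Matrix.mulVec]
  simp only [dotProduct]
  set f : Fin (n+1) → ZMod 2 := fun k => eps n (σ k) i with hf
  set e : Fin (n+1) → ZMod 2 := fun k => if v ≤ k then 1 else 0 with he
  have hterm : ∀ j : Fin n, adjMat σ i j * eps n v j
      = ((e * f) j.castSucc + (e * f) j.succ) + (if v = j.succ then f j.succ else 0) := by
    intro j
    rw [adjMat_apply]
    have hev : eps n v j = e j.castSucc := rfl
    rw [hev]
    by_cases h1 : v ≤ j.castSucc
    · have h2 : v ≤ j.succ := h1.trans (Fin.castSucc_lt_succ (i := j)).le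
      have h3 : v ≠ j.succ := by
        rintro rfl
        exact absurd h1 (not_le.2 (Fin.castSucc_lt_succ (i := j)))
      simp [he, h1, h2, h3, hf]
    · by_cases h3 : v = j.succ
      · simp [he, h1, h3, hf]
        rw [CharTwo.add_self_eq_zero]
      · have h2 : ¬ v ≤ j.succ := by
          intro h
          rcases lt_or_eq_of_le h with h' | h'
          · exact h1 (Fin.le_castSucc_iff.2 h')
          · exact h3 h'
        simp [he, h1, h2, h3]
  rw [Finset.sum_congr rfl (fun j _ => hterm j), Finset.sum_add_distrib, telescope (e * f)]
  have hcorr : ∑ j : Fin n, (if v = j.succ then f j.succ else 0) =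
      if v = 0 then 0 else f v := by
    rcases Fin.eq_zero_or_eq_succ v with rfl | ⟨w, rfl⟩
    · rw [if_pos rfl]
      exact Finset.sum_eq_zero fun j _ => if_neg (fun h => Fin.succ_ne_zero j h.symm)
    · rw [if_neg (Fin.succ_ne_zero w)]
      have hrw : ∀ j : Fin n, (if w.succ = j.succ then f j.succ else 0)
          = if j = w then f w.succ else 0 := by
        intro j
        by_cases h : j = w
        · subst h; simp
        · rw [if_neg (fun hh => h (Fin.succ_inj.1 hh.symm)), if_neg h]
      rw [Finset.sum_congr rfl fun j _ => hrw j]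
      simp
  rw [hcorr]
  have hE0 : (e * f) 0 = if v = 0 then f 0 else 0 := by
    simp only [Pi.mul_apply, he]
    by_cases h : v = 0 <;> simp [h, Fin.le_zero_iff]
  have hEl : (e * f) (Fin.last n) = f (Fin.last n) := by
    simp [he, Fin.le_last]
  rw [hE0, hEl]
  by_cases h : v = 0
  · subst h; simp [hf]
  · simp [h, hf]
    ring


lemma pow_mulVec {n : ℕ} (σ : Equiv.Perm (Fin (n+1))) (x : Fin (n+1))
    (α : Fin n → ZMod 2) (hα : α = fun j => eps n x j + eps n (σ x) j) :
    ∀ m : ℕ, ((adjMat σ)^m).mulVec α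
      = fun i => eps n ((σ^m) x) i + eps n ((σ^(m+1)) x) i := by
  intro m
  induction m with
  | zero =>
    rw [pow_zero, Matrix.one_mulVec, hα]
    simp
  | succ m ih =>
    rw [pow_succ', ← Matrix.mulVec_mulVec, ih]
    have hsplit : (fun i => eps n ((σ^m) x) i + eps n ((σ^(m+1)) x) i)
        = eps n ((σ^m) x) + eps n ((σ^(m+1)) x) := rfl
    rw [hsplit, Matrix.mulVec_add, mulVec_eps, mulVec_eps]
    funext i
    simp only [Pi.add_apply]
    have h1 : σ ((σ^m) x) = (σ^(m+1)) x := by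
      rw [pow_succ']; rfl
    have h2 : σ ((σ^(m+1)) x) = (σ^(m+2)) x := by
      rw [pow_succ' σ (m+1)]; rfl
    rw [h1, h2, add_add_add_comm, CharTwo.add_self_eq_zero, add_zero]

lemma sum_indicator {n : ℕ} (g : Fin n → ZMod 2) (c : ℕ) :
    ∑ m : Fin n, g m * (if (m:ℕ) = c then 1 else 0)
      = if h : c < n then g ⟨c, h⟩ else 0 := by
  split
  · next h =>
    rw [Finset.sum_eq_single (⟨c, h⟩ : Fin n)]
    · simp
    · intro m _ hm
      rw [if_neg (by simpa [Fin.ext_iff] using hm), mul_zero]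
    · intro habs; exact absurd (Finset.mem_univ _) habs
  · next h =>
    apply Finset.sum_eq_zero
    intro m _
    rw [if_neg (by omega), mul_zero]

lemma eps_diff {n : ℕ} (u : Fin (n+1)) (k k' : Fin n) (h : (k':ℕ) + 1 = (k:ℕ)) :
    eps n u k + eps n u k' = if u = k.castSucc then 1 else 0 := by
  simp only [eps, Fin.le_def, Fin.coe_castSucc, Fin.ext_iff]
  by_cases h1 : (u:ℕ) ≤ (k':ℕ)
  · rw [if_pos (by omega), if_pos h1, if_neg (by omega)]
    exact CharTwo.add_self_eq_zero 1
  · by_cases h2 : (u:ℕ) ≤ (k:ℕ)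
    · rw [if_pos h2, if_neg h1, if_pos (by omega)]; ring
    · rw [if_neg h2, if_neg h1, if_neg (by omega)]; ring

lemma eps_diff0 {n : ℕ} (u : Fin (n+1)) (k : Fin n) (h : (k:ℕ) = 0) :
    eps n u k = if u = k.castSucc then 1 else 0 := by
  simp only [eps, Fin.le_def, Fin.coe_castSucc, Fin.ext_iff]
  congr 1
  simp only [eq_iff_iff]
  omega


/-- For an `(n+1)`-cycle `σ = (i₁ i₂ … )`, writing `i₁ = x` and `i₂ = σ x`, the indicator
vector `α` of the interval of pair-indices between `i₁` and `i₂` (0-indexed: `α_j = 1` iff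
`min(x, σ x) ≤ j < max(x, σ x)`) generates `n` linearly independent vectors
`α, T_σ α, …, T_σ^(n-1) α` over `𝔽₂`. -/
theorem adjMat_cyclic_vector (n : ℕ) (hn : 1 ≤ n) (σ : Equiv.Perm (Fin (n + 1)))
    (hσ : IsNCycle σ) (x : Fin (n + 1))
    (α : Fin n → ZMod 2)
    (hα : ∀ j : Fin n,
      α j = if min x (σ x) ≤ j.castSucc ∧ j.castSucc < max x (σ x) then 1 else 0) :
    LinearIndependent (ZMod 2) (fun m : Fin n => ((adjMat σ) ^ (m : ℕ)).mulVec α) := by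
  -- basic cycle facts
  have hmove : ∀ z : Fin (n+1), σ z ≠ z := by
    intro z
    rw [← Equiv.Perm.mem_support, hσ.2]
    exact Finset.mem_univ z
  have hord : orderOf σ = n + 1 := by
    rw [hσ.1.orderOf, hσ.2, Finset.card_univ, Fintype.card_fin]
  have hinj : ∀ a b : ℕ, a ≤ n → b ≤ n → (σ^a) x = (σ^b) x → a = b := by
    intro a b ha hb h
    have hpow : σ^a = σ^b := hσ.1.pow_eq_pow_iff.2 ⟨x, hmove x, h⟩
    have hmod := pow_eq_pow_iff_modEq.1 hpow
    rw [hord] at hmod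
    have h2 : a % (n+1) = b % (n+1) := hmod
    rwa [Nat.mod_eq_of_lt (by omega), Nat.mod_eq_of_lt (by omega)] at h2
  obtain ⟨k₀, hk₀n, hk₀p⟩ : ∃ k ≤ n, (σ^k) x = Fin.last n := by
    obtain ⟨i, hi⟩ := hσ.1.exists_pow_eq (hmove x) (hmove (Fin.last n))
    refine ⟨i % (n+1), Nat.lt_succ_iff.1 (Nat.mod_lt _ (Nat.succ_pos n)), ?_⟩
    have hp : σ ^ (i % (n+1)) = σ ^ i := by
      conv_rhs => rw [← pow_mod_orderOf σ i]
      rw [hord]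
    rw [hp, hi]
  -- α decomposition
  have hαe : α = fun j => eps n x j + eps n (σ x) j := by
    funext j
    rw [hα j]
    simp only [eps]
    rw [← ite_xor]
    classical exact if_congr (xor_order x (σ x) j.castSucc) rfl rfl
  rw [Fintype.linearIndependent_iff]
  intro g hg
  -- evaluate the relation coordinatewise
  have hS : ∀ j : Fin n,
      (∑ m : Fin n, g m * (eps n ((σ^(m:ℕ)) x) j + eps n ((σ^((m:ℕ)+1)) x) j)) = 0 := by
    intro j
    have := congrFun hg j
    rw [Finset.sum_apply] at this
    simpa [pow_mulVec σ x α hαe] using this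
  set G : ℕ → ZMod 2 := fun k => if h : k < n then g ⟨k, h⟩ else 0 with hG
  -- the key relations
  have hrel : ∀ k : ℕ, k ≤ n → (σ^k) x ≠ Fin.last n →
      G k + (if 0 < k then G (k-1) else 0) = 0 := by
    intro k hk hne
    set p : Fin (n+1) := (σ^k) x with hp
    have hpn : (p:ℕ) < n := by
      have h1 : (p:ℕ) < n + 1 := p.isLt
      rcases Nat.lt_or_ge (p:ℕ) n with h | h
      · exact h
      · exact absurd (by ext; simp [Fin.last]; omega : p = Fin.last n) hne
    set jk : Fin n := ⟨(p:ℕ), hpn⟩ with hjk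
    have hcast : jk.castSucc = p := by ext; simp [hjk]
    have hcomb : (∑ m : Fin n, g m *
        ((if (σ^(m:ℕ)) x = p then 1 else 0) + (if (σ^((m:ℕ)+1)) x = p then (1:ZMod 2) else 0))) = 0 := by
      by_cases h0 : 0 < (p:ℕ)
      · set jk' : Fin n := ⟨(p:ℕ)-1, by omega⟩ with hjk'
        have hdiff : ((jk' : Fin n) : ℕ) + 1 = ((jk : Fin n) : ℕ) := by
          simp only [hjk, hjk']
          omega
        have hsum : (∑ m : Fin n, g m * (eps n ((σ^(m:ℕ)) x) jk + eps n ((σ^((m:ℕ)+1)) x) jk))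
            + (∑ m : Fin n, g m * (eps n ((σ^(m:ℕ)) x) jk' + eps n ((σ^((m:ℕ)+1)) x) jk')) = 0 := by
          rw [hS jk, hS jk', add_zero]
        rw [← Finset.sum_add_distrib] at hsum
        refine Eq.trans (Finset.sum_congr rfl fun m _ => ?_) hsum
        rw [← mul_add, add_add_add_comm, eps_diff _ jk jk' hdiff, eps_diff _ jk jk' hdiff, hcast]
      · have h0' : ((jk : Fin n) : ℕ) = 0 := by
          simp only [hjk]
          omega
        refine Eq.trans (Finset.sum_congr rfl fun m _ => ?_) (hS jk)
        rw [eps_diff0 _ jk h0', eps_diff0 _ jk h0', hcast]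
    rw [Finset.sum_congr rfl (fun m _ => mul_add (g m) _ _), Finset.sum_add_distrib] at hcomb
    have e1 : (∑ m : Fin n, g m * (if (σ^(m:ℕ)) x = p then 1 else 0)) = G k := by
      simp only [hG]
      rw [← sum_indicator g k]
      apply Finset.sum_congr rfl
      intro m _
      congr 1
      congr 1
      simp only [eq_iff_iff]
      exact ⟨fun h => hinj _ _ (Nat.le_of_lt m.isLt) hk h, fun h => by rw [h]⟩
    have e2 : (∑ m : Fin n, g m * (if (σ^((m:ℕ)+1)) x = p then (1:ZMod 2) else 0))
        = if 0 < k then G (k-1) else 0 := by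
      by_cases h0 : 0 < k
      · rw [if_pos h0]
        simp only [hG]
        rw [← sum_indicator g (k-1)]
        apply Finset.sum_congr rfl
        intro m _
        congr 1
        congr 1
        simp only [eq_iff_iff]
        constructor
        · intro h
          have := hinj ((m:ℕ)+1) k m.isLt hk h
          omega
        · intro h
          have : (m:ℕ) + 1 = k := by omega
          rw [this]
      · rw [if_neg h0]
        apply Finset.sum_eq_zero
        intro m _
        rw [if_neg, mul_zero]
        intro h
        have := hinj ((m:ℕ)+1) k m.isLt hk h
        omega
    rw [e1, e2] at hcomb
    exact hcomb
  -- uniqueness of k₀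
  have huniq : ∀ k : ℕ, k ≤ n → (σ^k) x = Fin.last n → k = k₀ := by
    intro k hk h
    exact hinj k k₀ hk hk₀n (by rw [h, hk₀p])
  -- below k₀ : upward induction
  have claim1 : ∀ k : ℕ, k < k₀ → G k = 0 := by
    intro k
    induction k using Nat.strong_induction_on with
    | _ k ih =>
      intro hkk
      have hne : (σ^k) x ≠ Fin.last n := fun h => by
        have := huniq k (by omega) h; omega
      have := hrel k (by omega) hne
      by_cases h0 : 0 < k
      · rw [if_pos h0, ih (k-1) (by omega) (by omega), add_zero] at this
        exact this
      · rw [if_neg h0, add_zero] at this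
        exact this
  -- at or above k₀ : downward induction
  have claim2 : ∀ d : ℕ, ∀ k : ℕ, k₀ ≤ k → k ≤ n → n - k ≤ d → G k = 0 := by
    intro d
    induction d with
    | zero =>
      intro k _ hk hd
      have : k = n := by omega
      rw [this]
      simp only [hG]
      rw [dif_neg (lt_irrefl n)]
    | succ d ih =>
      intro k hk₀ hk hd
      by_cases hkn : k = n
      · rw [hkn]
        simp only [hG]
        rw [dif_neg (lt_irrefl n)]
      · have hk1 : k + 1 ≤ n := by omega
        have hne : (σ^(k+1)) x ≠ Fin.last n := fun h => by
          have := huniq (k+1) hk1 h; omega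
        have hr := hrel (k+1) hk1 hne
        rw [if_pos (by omega)] at hr
        simp only [Nat.add_sub_cancel] at hr
        have hGk1 : G (k+1) = 0 := ih (k+1) (by omega) hk1 (by omega)
        rw [hGk1, zero_add] at hr
        exact hr
  intro m
  have hGm : g m = G (m:ℕ) := by
    simp only [hG]
    rw [dif_pos m.isLt]
  rw [hGm]
  rcases Nat.lt_or_ge (m:ℕ) k₀ with h | h
  · exact claim1 _ h
  · exact claim2 n _ h (by omega) (by omega)
end

section
/- Let σ be an n-cycle in Sₙ and T_σ its (n−1)×(n−1) adjacency matrix over 𝔽₂. Then the minimal polynomial of T_σ over 𝔽₂ has degree n−1, and hence equals the characteristic polynomial of T_σ. -/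
namespace AdjAux

open Matrix Polynomial Finset

variable {n : ℕ}

/-- permutation matrix -/
def P (τ : Equiv.Perm (Fin (n + 1))) : Matrix (Fin (n + 1)) (Fin (n + 1)) (ZMod 2) :=
  Matrix.of fun t s => if t = τ s then 1 else 0

/-- boundary matrix, column `j` is `δ_{j} + δ_{j+1}` -/
def B (n : ℕ) : Matrix (Fin (n + 1)) (Fin n) (ZMod 2) :=
  Matrix.of fun t j => if t = j.castSucc ∨ t = j.succ then 1 else 0

theorem P_one : P (1 : Equiv.Perm (Fin (n+1))) = 1 := by
  ext t s
  simp [P, Matrix.one_apply]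
  split_ifs <;> simp_all

theorem P_mul_apply {m : Type*} [Fintype m] (τ : Equiv.Perm (Fin (n + 1)))
    (M : Matrix (Fin (n + 1)) m (ZMod 2)) (t : Fin (n + 1)) (j : m) :
    (P τ * M) t j = M (τ⁻¹ t) j := by
  rw [Matrix.mul_apply]
  have : ∀ s, P τ t s * M s j = if s = τ⁻¹ t then M s j else 0 := by
    intro s
    have : (t = τ s) ↔ (s = τ⁻¹ t) := by
      constructor
      · rintro rfl; simp
      · rintro rfl; simp
    simp only [P, Matrix.of_apply, this]
    split_ifs <;> simp
  simp only [this, Finset.sum_ite_eq' Finset.univ, Finset.mem_univ, if_true]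

theorem P_mul_P (τ τ' : Equiv.Perm (Fin (n + 1))) : P τ * P τ' = P (τ * τ') := by
  ext t s
  rw [P_mul_apply]
  simp only [P, Matrix.of_apply, Equiv.Perm.mul_apply]
  congr 1
  simp [Equiv.Perm.eq_inv_iff_eq, eq_comm]
  rw [Equiv.eq_symm_apply]
  exact eq_comm

theorem P_pow (σ : Equiv.Perm (Fin (n + 1))) (k : ℕ) : (P σ) ^ k = P (σ ^ k) := by
  induction k with
  | zero => simp [P_one]
  | succ k ih => rw [pow_succ, ih, P_mul_P, ← pow_succ]

theorem Bsum (t : Fin (n + 1)) (f : Fin n → ZMod 2) :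
    ∑ i, B n t i * f i =
      (if h : (t : ℕ) < n then f ⟨t, h⟩ else 0) +
        (if h : 0 < (t : ℕ) then f ⟨(t : ℕ) - 1, by omega⟩ else 0) := by
  have step : ∀ i : Fin n, B n t i * f i =
      (if (t : ℕ) = (i : ℕ) then f i else 0) + (if (t : ℕ) = (i : ℕ) + 1 then f i else 0) := by
    intro i
    simp only [B, Matrix.of_apply, Fin.ext_iff, Fin.coe_castSucc, Fin.val_succ]
    split_ifs <;> first | ring1 | (exfalso; omega)
  rw [Finset.sum_congr rfl fun i _ => step i, Finset.sum_add_distrib]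
  congr 1
  · split_ifs with h
    · have : ∀ i : Fin n, ((t : ℕ) = (i : ℕ)) ↔ i = ⟨t, h⟩ := by
        intro i; simp [Fin.ext_iff, eq_comm]
      simp only [this]
      simp
    · apply Finset.sum_eq_zero
      intro i _
      rw [if_neg]
      omega
  · split_ifs with h
    · have hlt : (t : ℕ) - 1 < n := by omega
      have : ∀ i : Fin n, ((t : ℕ) = (i : ℕ) + 1) ↔ i = ⟨(t : ℕ) - 1, hlt⟩ := by
        intro i; simp [Fin.ext_iff]; omega
      simp only [this]
      simp
    · apply Finset.sum_eq_zero
      intro i _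
      rw [if_neg]
      omega

theorem pair_min' (u v : Fin (n + 1)) :
    ({u, v} : Finset (Fin (n + 1))).min' (by simp) = min u v := by
  apply le_antisymm
  · apply Finset.min'_le
    rcases le_total u v with h | h
    · simp [min_eq_left h]
    · simp [min_eq_right h]
  · apply Finset.le_min'
    intro y hy
    simp only [Finset.mem_insert, Finset.mem_singleton] at hy
    rcases hy with rfl | rfl
    · exact min_le_left _ _
    · exact min_le_right _ _

theorem pair_max' (u v : Fin (n + 1)) :
    ({u, v} : Finset (Fin (n + 1))).max' (by simp) = max u v := by
  apply le_antisymm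
  · apply Finset.max'_le
    intro y hy
    simp only [Finset.mem_insert, Finset.mem_singleton] at hy
    rcases hy with rfl | rfl
    · exact le_max_left _ _
    · exact le_max_right _ _
  · apply Finset.le_max'
    rcases le_total u v with h | h
    · simp [max_eq_right h]
    · simp [max_eq_left h]

theorem convPerm_pairA (σ : Equiv.Perm (Fin (n + 1))) (j : Fin n) :
    convPerm σ (pairA j) =
      Finset.Icc (min (σ j.castSucc) (σ j.succ)) (max (σ j.castSucc) (σ j.succ)) := by
  have hne : (pairA j).Nonempty := by simp [pairA]
  have himg : (pairA j).image σ = {σ j.castSucc, σ j.succ} := by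
    simp [pairA, Finset.image_insert]
  rw [convPerm, dif_pos hne]
  simp only [himg]
  rw [pair_min', pair_max']

theorem adjMat_apply (σ : Equiv.Perm (Fin (n + 1))) (i j : Fin n) :
    adjMat σ i j =
      if min (σ j.castSucc) (σ j.succ) ≤ i.castSucc ∧ i.succ ≤ max (σ j.castSucc) (σ j.succ)
      then 1 else 0 := by
  rw [adjMat, Matrix.of_apply, convPerm_pairA]
  refine if_congr ?_ rfl rfl
  rw [pairA]
  simp only [Finset.insert_subset_iff, Finset.singleton_subset_iff, Finset.mem_Icc]
  constructor
  · rintro ⟨⟨h1, -⟩, -, h4⟩; exact ⟨h1, h4⟩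
  · rintro ⟨h1, h4⟩
    have hcs : i.castSucc ≤ i.succ := Fin.castSucc_lt_succ.le
    exact ⟨⟨h1, le_trans hcs h4⟩, le_trans h1 hcs, h4⟩

theorem key (σ : Equiv.Perm (Fin (n + 1))) : P σ * B n = B n * adjMat σ := by
  ext t j
  rw [P_mul_apply, Matrix.mul_apply, Bsum]
  set u := σ j.castSucc with hu
  set v := σ j.succ with hv
  have hBval : B n (σ⁻¹ t) j = if t = u ∨ t = v then 1 else 0 := by
    rw [B, Matrix.of_apply]
    refine if_congr ?_ rfl rfl
    rw [Equiv.Perm.inv_eq_iff_eq, Equiv.Perm.inv_eq_iff_eq]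
  rw [hBval]
  have hne : (u : ℕ) ≠ (v : ℕ) := by
    intro h
    have : j.castSucc = j.succ := σ.injective (Fin.ext h)
    have := Fin.ext_iff.1 this
    simp only [Fin.coe_castSucc, Fin.val_succ] at this
    omega
  have htle : (t : ℕ) ≤ n := Fin.is_le t
  have hule : (u : ℕ) ≤ n := Fin.is_le u
  have hvle : (v : ℕ) ≤ n := Fin.is_le v
  rcases le_total u v with huv | hvu
  · have huv' : (u : ℕ) < (v : ℕ) := lt_of_le_of_ne (by exact_mod_cast huv) hne
    simp only [adjMat, Matrix.of_apply, convPerm_pairA, ← hu, ← hv, min_eq_left huv,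
      max_eq_right huv]
    have hsub : ∀ (i : Fin n), (pairA i ⊆ Finset.Icc u v) ↔
        ((u : ℕ) ≤ (i : ℕ) ∧ (i : ℕ) + 1 ≤ (v : ℕ)) := by
      intro i
      rw [pairA]
      simp only [Finset.insert_subset_iff, Finset.singleton_subset_iff, Finset.mem_Icc,
        Fin.le_def, Fin.coe_castSucc, Fin.val_succ]
      omega
    simp only [hsub, Fin.ext_iff]
    split_ifs <;> first | decide | (exfalso; omega)
  · have hvu' : (v : ℕ) < (u : ℕ) := lt_of_le_of_ne (by exact_mod_cast hvu) (Ne.symm hne)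
    simp only [adjMat, Matrix.of_apply, convPerm_pairA, ← hu, ← hv, min_eq_right hvu,
      max_eq_left hvu]
    have hsub : ∀ (i : Fin n), (pairA i ⊆ Finset.Icc v u) ↔
        ((v : ℕ) ≤ (i : ℕ) ∧ (i : ℕ) + 1 ≤ (u : ℕ)) := by
      intro i
      rw [pairA]
      simp only [Finset.insert_subset_iff, Finset.singleton_subset_iff, Finset.mem_Icc,
        Fin.le_def, Fin.coe_castSucc, Fin.val_succ]
      omega
    simp only [hsub, Fin.ext_iff]
    split_ifs <;> first | decide | (exfalso; omega)

theorem B_mul_inj {m : Type*} [Fintype m] (M : Matrix (Fin n) m (ZMod 2))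
    (h : B n * M = 0) : M = 0 := by
  have H : ∀ k (hk : k < n) (j : m), M ⟨k, hk⟩ j = 0 := by
    intro k
    induction k using Nat.strong_induction_on with
    | _ k ih =>
      intro hk j
      have h0 : (B n * M) ⟨k, by omega⟩ j = 0 := by rw [h]; rfl
      rw [Matrix.mul_apply, Bsum] at h0
      simp only at h0
      rw [dif_pos (show ((⟨k, by omega⟩ : Fin (n+1)) : ℕ) < n from hk)] at h0
      match k, hk with
      | 0, hk =>
        rw [dif_neg (by simp)] at h0
        simpa using h0
      | (k+1), hk =>
        rw [dif_pos (by simp)] at h0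
        have hk' : k < n := by omega
        have : M ⟨k, hk'⟩ j = 0 := ih k (by omega) hk' j
        simp only [Nat.add_sub_cancel] at h0
        rw [this, add_zero] at h0
        exact h0
  ext i j
  have := H i.1 i.2 j
  simpa using this

theorem pow_key (σ : Equiv.Perm (Fin (n + 1))) (k : ℕ) :
    (P σ) ^ k * B n = B n * adjMat σ ^ k := by
  induction k with
  | zero => simp
  | succ k ih =>
    rw [pow_succ, pow_succ, Matrix.mul_assoc, key, ← Matrix.mul_assoc, ih, Matrix.mul_assoc]

theorem aeval_comm (σ : Equiv.Perm (Fin (n + 1))) (p : Polynomial (ZMod 2)) :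
    aeval (P σ) p * B n = B n * aeval (adjMat σ) p := by
  rw [Polynomial.aeval_eq_sum_range (x := P σ), Polynomial.aeval_eq_sum_range (x := adjMat σ),
    Matrix.sum_mul, Matrix.mul_sum]
  refine Finset.sum_congr rfl fun k _ => ?_
  rw [Matrix.smul_mul, Matrix.mul_smul, pow_key]

theorem hful (σ : Equiv.Perm (Fin (n + 1))) (hσ : IsNCycle σ) : ∀ x, σ x ≠ x :=
  fun x => Equiv.Perm.mem_support.1 (hσ.2 ▸ Finset.mem_univ x)

theorem horder (σ : Equiv.Perm (Fin (n + 1))) (hσ : IsNCycle σ) : orderOf σ = n + 1 := by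
  rw [hσ.1.orderOf, hσ.2]
  simp

theorem pow_inj (σ : Equiv.Perm (Fin (n + 1))) (hσ : IsNCycle σ) {s : Fin (n + 1)} {k l : ℕ}
    (hk : k ≤ n) (hl : l ≤ n) (h : (σ ^ k) s = (σ ^ l) s) : k = l := by
  wlog hkl : k ≤ l generalizing k l
  · exact (this hl hk h.symm (by omega)).symm
  by_contra hne
  have hd : 0 < l - k := by omega
  have hfix : (σ ^ (l - k)) ((σ ^ k) s) = (σ ^ k) s := by
    rw [← Equiv.Perm.mul_apply, ← pow_add, Nat.sub_add_cancel hkl, ← h]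
  have h1 : σ ^ (l - k) = 1 := (hσ.1.pow_eq_one_iff' (hful σ hσ _)).2 hfix
  have h2 := orderOf_dvd_of_pow_eq_one h1
  rw [horder σ hσ] at h2
  have := Nat.le_of_dvd hd h2
  omega

theorem orbit_exists (σ : Equiv.Perm (Fin (n + 1))) (hσ : IsNCycle σ) (s t : Fin (n + 1)) :
    ∃ k ≤ n, (σ ^ k) s = t := by
  obtain ⟨i, hi⟩ := hσ.1.exists_pow_eq (hful σ hσ s) (hful σ hσ t)
  refine ⟨i % (n + 1), Nat.lt_succ_iff.1 (Nat.mod_lt _ (by omega)), ?_⟩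
  have : σ ^ (i % (n + 1)) = σ ^ i := by
    conv_rhs => rw [← pow_mod_orderOf]
    rw [horder σ hσ]
  rw [this, hi]

theorem orbit_sum (σ : Equiv.Perm (Fin (n + 1))) (hσ : IsNCycle σ) (s t : Fin (n + 1)) :
    ∑ k ∈ Finset.range (n + 1), (if t = (σ ^ k) s then (1 : ZMod 2) else 0) = 1 := by
  obtain ⟨k0, hk0le, hk0⟩ := orbit_exists σ hσ s t
  rw [Finset.sum_eq_single_of_mem k0 (Finset.mem_range.2 (Nat.lt_succ_of_le hk0le))]
  · rw [if_pos hk0.symm]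
  · intro b hb hbne
    have hb' : b ≤ n := Nat.lt_succ_iff.1 (Finset.mem_range.1 hb)
    rw [if_neg]
    intro hbt
    exact hbne (pow_inj σ hσ hb' hk0le (by rw [← hbt, hk0]))

/-- the geometric sum polynomial `1 + X + ... + X^n` -/
noncomputable def q (n : ℕ) : Polynomial (ZMod 2) :=
  ∑ k ∈ Finset.range (n + 1), (Polynomial.X : Polynomial (ZMod 2)) ^ k

theorem q_monic : (q n).Monic := Polynomial.monic_geom_sum_X (Nat.succ_ne_zero n)

theorem q_natDegree : (q n).natDegree = n := by
  have hdeg : (q n).degree = (n : WithBot ℕ) := by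
    rw [q, Finset.sum_range_succ]
    rw [Polynomial.degree_add_eq_right_of_degree_lt]
    · exact Polynomial.degree_X_pow n
    · rw [Polynomial.degree_X_pow]
      refine lt_of_le_of_lt (Polynomial.degree_sum_le _ _) ?_
      rw [Finset.sup_lt_iff (by exact_mod_cast WithBot.bot_lt_coe n)]
      intro i hi
      rw [Polynomial.degree_X_pow]
      exact_mod_cast Finset.mem_range.1 hi
  exact Polynomial.natDegree_eq_of_degree_eq_some hdeg

theorem annihilate (σ : Equiv.Perm (Fin (n + 1))) (hσ : IsNCycle σ) :
    aeval (adjMat σ) (q n) = 0 := by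
  apply B_mul_inj
  rw [← aeval_comm, q, map_sum]
  have hPk : ∀ k : ℕ, aeval (P σ) ((Polynomial.X : Polynomial (ZMod 2)) ^ k) = P (σ ^ k) := by
    intro k
    rw [map_pow, Polynomial.aeval_X, P_pow]
  rw [Finset.sum_congr rfl fun k _ => hPk k, Matrix.sum_mul]
  ext t j
  rw [Matrix.sum_apply]
  have hterm : ∀ k ∈ Finset.range (n + 1), (P (σ ^ k) * B n) t j =
      (if t = (σ ^ k) j.castSucc then (1 : ZMod 2) else 0) +
        (if t = (σ ^ k) j.succ then (1 : ZMod 2) else 0) := by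
    intro k _
    rw [P_mul_apply, B, Matrix.of_apply]
    have h1 : ((σ ^ k)⁻¹ t = j.castSucc) ↔ t = (σ ^ k) j.castSucc := by
      rw [Equiv.Perm.inv_eq_iff_eq]
    have h2 : ((σ ^ k)⁻¹ t = j.succ) ↔ t = (σ ^ k) j.succ := by
      rw [Equiv.Perm.inv_eq_iff_eq]
    have hne : (σ ^ k) j.castSucc ≠ (σ ^ k) j.succ := by
      intro h
      have := (σ ^ k).injective h
      have := Fin.ext_iff.1 this
      simp only [Fin.coe_castSucc, Fin.val_succ] at this
      omega
    rw [if_congr (or_congr h1 h2) rfl rfl]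
    split_ifs with ha hb hc <;> first | ring1 | (exfalso; subst_vars; simp_all)
  rw [Finset.sum_congr rfl hterm, Finset.sum_add_distrib, orbit_sum σ hσ, orbit_sum σ hσ]
  norm_num
  rfl

theorem mul_B_apply (M : Matrix (Fin (n + 1)) (Fin (n + 1)) (ZMod 2)) (t : Fin (n + 1))
    (j : Fin n) : (M * B n) t j = M t j.castSucc + M t j.succ := by
  rw [Matrix.mul_apply]
  have hne : j.castSucc ≠ j.succ := by
    intro h
    have := Fin.ext_iff.1 h
    simp only [Fin.coe_castSucc, Fin.val_succ] at this
    omega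
  have hterm : ∀ s, M t s * B n s j =
      (if s = j.castSucc then M t s else 0) + (if s = j.succ then M t s else 0) := by
    intro s
    rw [B, Matrix.of_apply]
    split_ifs with ha hb hc <;> first | ring1 | (exfalso; tauto) | (subst_vars; exfalso; tauto)
  rw [Finset.sum_congr rfl fun s _ => hterm s, Finset.sum_add_distrib,
    Finset.sum_ite_eq' Finset.univ, Finset.sum_ite_eq' Finset.univ]
  simp

theorem lower_bound (σ : Equiv.Perm (Fin (n + 1))) (hσ : IsNCycle σ) (p : Polynomial (ZMod 2))
    (hdeg : p.natDegree < n) (hann : aeval (adjMat σ) p = 0) : p = 0 := by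
  have hPB : aeval (P σ) p * B n = 0 := by rw [aeval_comm, hann, Matrix.mul_zero]
  set M := aeval (P σ) p with hM
  have hMapply : ∀ t s : Fin (n + 1),
      M t s = ∑ k ∈ Finset.range n, p.coeff k * (if t = (σ ^ k) s then 1 else 0) := by
    intro t s
    rw [hM, Polynomial.aeval_eq_sum_range' hdeg, Matrix.sum_apply]
    refine Finset.sum_congr rfl fun k _ => ?_
    rw [Matrix.smul_apply, P_pow, smul_eq_mul]
    rfl
  have hcoleq : ∀ (t : Fin (n + 1)) (j : Fin n), M t j.castSucc = M t j.succ := by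
    intro t j
    have h0 : (M * B n) t j = 0 := by rw [hPB]; rfl
    rw [mul_B_apply] at h0
    have := eq_neg_of_add_eq_zero_left h0
    rwa [CharTwo.neg_eq] at this
  have hconst : ∀ (t s : Fin (n + 1)), M t s = M t 0 := by
    intro t s
    have H : ∀ m (hm : m ≤ n), M t ⟨m, by omega⟩ = M t ⟨0, by omega⟩ := by
      intro m
      induction m with
      | zero => intro _; rfl
      | succ m ih =>
        intro hm
        have hmn : m < n := by omega
        have hcs : (⟨m, by omega⟩ : Fin (n + 1)) = (⟨m, hmn⟩ : Fin n).castSucc := rfl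
        have hss : (⟨m + 1, by omega⟩ : Fin (n + 1)) = (⟨m, hmn⟩ : Fin n).succ := rfl
        rw [hss, ← hcoleq t ⟨m, hmn⟩, ← hcs, ih (by omega)]
    have := H s.1 (by omega)
    simpa using this
  have hcoeff : ∀ m, m < n → p.coeff m = 0 := by
    intro m
    induction m using Nat.strong_induction_on with
    | _ m ih =>
      intro hm
      have he1 : M ((σ ^ m) 0) 0 = p.coeff m := by
        rw [hMapply]
        rw [Finset.sum_eq_single_of_mem m (Finset.mem_range.2 hm)]
        · rw [if_pos rfl, mul_one]
        · intro b hb hbne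
          have hb' : b ≤ n := by have := Finset.mem_range.1 hb; omega
          rw [if_neg, mul_zero]
          intro hbt
          exact hbne (pow_inj σ hσ (show m ≤ n by omega) hb' hbt).symm
      have he2 : M ((σ ^ m) 0) (σ 0) = if m = 0 then 0 else p.coeff (m - 1) := by
        rw [hMapply]
        have hpow : ∀ k : ℕ, (σ ^ k) (σ 0) = (σ ^ (k + 1)) 0 := by
          intro k
          rw [pow_succ, Equiv.Perm.mul_apply]
        by_cases hm0 : m = 0
        · subst hm0
          rw [if_pos rfl]
          apply Finset.sum_eq_zero
          intro k hk
          rw [hpow, if_neg, mul_zero]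
          intro hcontra
          have hk' : k + 1 ≤ n := by have := Finset.mem_range.1 hk; omega
          have := pow_inj σ hσ (k := 0) (l := k + 1) (by omega) hk'
            (by simpa using hcontra)
          omega
        · rw [if_neg hm0]
          rw [Finset.sum_eq_single_of_mem (m - 1) (Finset.mem_range.2 (by omega))]
          · have hmm : m - 1 + 1 = m := by omega
            rw [hpow, hmm, if_pos rfl, mul_one]
          · intro b hb hbne
            rw [hpow, if_neg, mul_zero]
            intro hcontra
            have hb' : b + 1 ≤ n := by have := Finset.mem_range.1 hb; omega
            have := pow_inj σ hσ (k := m) (l := b + 1) (by omega) hb' hcontra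
            omega
      have hc : M ((σ ^ m) 0) (σ 0) = M ((σ ^ m) 0) 0 := hconst _ _
      have hfin : p.coeff m = if m = 0 then 0 else p.coeff (m - 1) := by
        rw [← he1, ← hc, he2]
      by_cases hm0 : m = 0
      · rwa [if_pos hm0] at hfin
      · rw [if_neg hm0] at hfin
        rw [hfin]
        exact ih (m - 1) (by omega) (by omega)
  apply Polynomial.ext
  intro k
  by_cases hk : k < n
  · rw [hcoeff k hk, Polynomial.coeff_zero]
  · rw [Polynomial.coeff_eq_zero_of_natDegree_lt (lt_of_lt_of_le hdeg (by omega)),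
      Polynomial.coeff_zero]

end AdjAux

/-- The minimal polynomial of `T_σ` over `𝔽₂` has degree `n` (the paper's `n - 1`),
and hence equals the characteristic polynomial of `T_σ`. -/
theorem adjMat_minpoly (n : ℕ) (hn : 1 ≤ n) (σ : Equiv.Perm (Fin (n + 1)))
    (hσ : IsNCycle σ) :
    (minpoly (ZMod 2) (adjMat σ)).natDegree = n ∧
      minpoly (ZMod 2) (adjMat σ) = (adjMat σ).charpoly := by
  have hint : IsIntegral (ZMod 2) (adjMat σ) := (adjMat σ).isIntegral
  have hmono := minpoly.monic hint
  have hne0 := minpoly.ne_zero hint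
  have hdvdq : minpoly (ZMod 2) (adjMat σ) ∣ AdjAux.q n :=
    minpoly.dvd _ _ (AdjAux.annihilate σ hσ)
  have hle : (minpoly (ZMod 2) (adjMat σ)).natDegree ≤ n := by
    have := Polynomial.natDegree_le_of_dvd hdvdq AdjAux.q_monic.ne_zero
    rwa [AdjAux.q_natDegree] at this
  have hdegeq : (minpoly (ZMod 2) (adjMat σ)).natDegree = n := by
    by_contra h
    have hlt : (minpoly (ZMod 2) (adjMat σ)).natDegree < n := by omega
    exact hne0 (AdjAux.lower_bound σ hσ _ hlt (minpoly.aeval _ _))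
  refine ⟨hdegeq, ?_⟩
  have hdvdc : minpoly (ZMod 2) (adjMat σ) ∣ (adjMat σ).charpoly :=
    (adjMat σ).minpoly_dvd_charpoly
  have hcdeg : (adjMat σ).charpoly.natDegree = n := by
    rw [Matrix.charpoly_natDegree_eq_dim, Fintype.card_fin]
  exact (Polynomial.eq_of_monic_of_dvd_of_natDegree_le hmono ((adjMat σ).charpoly_monic)
    hdvdc (by rw [hcdeg, hdegeq])).symm
end

section
/- Let σ be an n-cycle in Sₙ with associated directed graph Γ_σ on vertices A₁,…,A_{n−1}, where A_i = {i,i+1} and there is an edge A_i → A_j iff convσ(A_i) ⊇ A_j. Then for each i, the characteristic number m_i = min{m ≥ 1 : (convσ)^m(A_i) ⊇ A_i} equals the minimal length of a directed cycle in Γ_σ passing through the vertex A_i. -/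
lemma pairA_eq_Icc {n : ℕ} (i : Fin n) : pairA i = Finset.Icc i.castSucc i.succ := by
  ext e
  simp [pairA, Finset.mem_Icc, Fin.le_def, Fin.ext_iff]
  omega

lemma convPerm_mono {N : ℕ} (σ : Equiv.Perm (Fin N)) {A B : Finset (Fin N)} (h : A ⊆ B) :
    convPerm σ A ⊆ convPerm σ B := by
  unfold convPerm
  by_cases hA : A.Nonempty
  · have hB : B.Nonempty := hA.mono h
    rw [dif_pos hA, dif_pos hB]
    apply Finset.Icc_subset_Icc
    · exact Finset.min'_le _ _ (Finset.image_subset_image h (Finset.min'_mem _ _))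
    · exact Finset.le_max' _ _ (Finset.image_subset_image h (Finset.max'_mem _ _))
  · rw [dif_neg hA]
    exact Finset.empty_subset _

lemma ivt (g : ℕ → ℕ) (s : ℕ) : ∀ v u, u ≤ v → g u ≤ s → s < g v →
    ∃ w, u ≤ w ∧ w < v ∧ g w ≤ s ∧ s < g (w + 1) := by
  intro v
  induction v with
  | zero =>
    intro u hu h1 h2
    obtain rfl : u = 0 := by omega
    omega
  | succ v ih =>
    intro u hu h1 h2
    rcases eq_or_lt_of_le hu with rfl | hlt
    · omega
    · have huv : u ≤ v := by omega
      by_cases h : g v ≤ s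
      · exact ⟨v, huv, Nat.lt_succ_self v, h, h2⟩
      · obtain ⟨w, hw1, hw2, hw3, hw4⟩ := ih u huv h1 (by omega)
        exact ⟨w, hw1, by omega, hw3, hw4⟩


lemma convPerm_Icc_spec {n : ℕ} (σ : Equiv.Perm (Fin (n + 1))) {a b : Fin (n + 1)}
    (hab : a < b) :
    ∃ a' b' : Fin (n + 1), a' < b' ∧ convPerm σ (Finset.Icc a b) = Finset.Icc a' b' := by
  have hne : (Finset.Icc a b).Nonempty := ⟨a, Finset.mem_Icc.mpr ⟨le_refl a, le_of_lt hab⟩⟩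
  refine ⟨((Finset.Icc a b).image σ).min' (hne.image σ),
    ((Finset.Icc a b).image σ).max' (hne.image σ), ?_, dif_pos hne⟩
  have ha : σ a ∈ (Finset.Icc a b).image σ :=
    Finset.mem_image_of_mem σ (Finset.mem_Icc.mpr ⟨le_refl a, le_of_lt hab⟩)
  have hb : σ b ∈ (Finset.Icc a b).image σ :=
    Finset.mem_image_of_mem σ (Finset.mem_Icc.mpr ⟨le_of_lt hab, le_refl b⟩)
  have hne' : σ a ≠ σ b := fun h => absurd (σ.injective h) (ne_of_lt hab)
  exact Finset.min'_lt_max' _ ha hb hne'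

lemma key_step {n : ℕ} (σ : Equiv.Perm (Fin (n + 1))) {a b : Fin (n + 1)} (hab : a ≤ b)
    (s : Fin n) (hs : pairA s ⊆ convPerm σ (Finset.Icc a b)) :
    ∃ t : Fin n, pairA t ⊆ Finset.Icc a b ∧ pairA s ⊆ convPerm σ (pairA t) := by
  have hne : (Finset.Icc a b).Nonempty := ⟨a, Finset.mem_Icc.mpr ⟨le_refl a, hab⟩⟩
  rw [convPerm, dif_pos hne] at hs
  have hs1 := Finset.mem_Icc.mp (hs (Finset.mem_insert_self _ _))
  have hs2 := Finset.mem_Icc.mp (hs (Finset.mem_insert_of_mem (Finset.mem_singleton_self _)))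
  obtain ⟨x, hxI, hx⟩ := Finset.mem_image.mp (Finset.min'_mem _ (hne.image σ))
  obtain ⟨y, hyI, hy⟩ := Finset.mem_image.mp (Finset.max'_mem _ (hne.image σ))
  have hxv : (σ x).val ≤ s.val := by
    have h := le_trans (le_of_eq hx) hs1.1
    rw [Fin.le_def, Fin.coe_castSucc] at h
    exact h
  have hyv : s.val + 1 ≤ (σ y).val := by
    have h := le_trans hs2.2 (le_of_eq hy.symm)
    rw [Fin.le_def, Fin.val_succ] at h
    exact h
  have hax : a.val ≤ x.val := Fin.le_def.mp (Finset.mem_Icc.mp hxI).1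
  have hxb : x.val ≤ b.val := Fin.le_def.mp (Finset.mem_Icc.mp hxI).2
  have hay : a.val ≤ y.val := Fin.le_def.mp (Finset.mem_Icc.mp hyI).1
  have hyb : y.val ≤ b.val := Fin.le_def.mp (Finset.mem_Icc.mp hyI).2
  set g : ℕ → ℕ := fun u => (σ ⟨min u n, Nat.lt_succ_of_le (min_le_right u n)⟩).val with hg
  have hgeq : ∀ (u : ℕ) (h : u < n + 1), g u = (σ ⟨u, h⟩).val := by
    intro u h
    have he : (⟨min u n, Nat.lt_succ_of_le (min_le_right u n)⟩ : Fin (n + 1)) = ⟨u, h⟩ :=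
      Fin.ext (by simp; omega)
    simp only [hg, he]
  have hgx : g x.val = (σ x).val := by rw [hgeq x.val x.isLt, Fin.eta]
  have hgy : g y.val = (σ y).val := by rw [hgeq y.val y.isLt, Fin.eta]
  have main : ∃ w, a.val ≤ w ∧ w + 1 ≤ b.val ∧
      ((g w ≤ s.val ∧ s.val + 1 ≤ g (w + 1)) ∨ (g (w + 1) ≤ s.val ∧ s.val + 1 ≤ g w)) := by
    rcases le_total x.val y.val with hxy | hxy
    · obtain ⟨w, hw1, hw2, hw3, hw4⟩ := ivt g s.val y.val x.val hxy (by omega) (by omega)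
      exact ⟨w, by omega, by omega, Or.inl ⟨hw3, by omega⟩⟩
    · set g' : ℕ → ℕ := fun u => if g u ≤ s.val then 1 else 0 with hg'
      obtain ⟨w, hw1, hw2, hw3, hw4⟩ := ivt g' 0 x.val y.val hxy
        (by simp only [hg']; rw [if_neg (by omega)])
        (by simp only [hg']; rw [if_pos (by omega)]; norm_num)
      have h3 : s.val + 1 ≤ g w := by
        by_contra hc
        simp only [hg', if_pos (by omega : g w ≤ s.val)] at hw3
        omega
      have h4 : g (w + 1) ≤ s.val := by
        by_contra hc
        simp only [hg', if_neg (by omega : ¬ g (w + 1) ≤ s.val)] at hw4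
        omega
      exact ⟨w, by omega, by omega, Or.inr ⟨h4, h3⟩⟩
  obtain ⟨w, hw1, hw2, hw3⟩ := main
  have hbn : b.val ≤ n := by omega
  have hwn : w < n := by omega
  have hgc : g w = (σ (Fin.castSucc ⟨w, hwn⟩)).val := by
    rw [hgeq w (by omega)]; rfl
  have hgs : g (w + 1) = (σ (Fin.succ ⟨w, hwn⟩)).val := by
    rw [hgeq (w + 1) (by omega)]; rfl
  refine ⟨⟨w, hwn⟩, ?_, ?_⟩
  · intro e he
    simp only [pairA, Finset.mem_insert, Finset.mem_singleton] at he
    rcases he with rfl | rfl <;>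
    · refine Finset.mem_Icc.mpr ⟨?_, ?_⟩ <;>
      · rw [Fin.le_def]
        simp only [Fin.coe_castSucc, Fin.val_succ]
        omega
  · have hpne : (pairA (⟨w, hwn⟩ : Fin n)).Nonempty := ⟨_, Finset.mem_insert_self _ _⟩
    rw [convPerm, dif_pos hpne]
    have hc : (σ (Fin.castSucc ⟨w, hwn⟩)) ∈ (pairA ⟨w, hwn⟩).image σ :=
      Finset.mem_image_of_mem σ (Finset.mem_insert_self _ _)
    have hsu : (σ (Fin.succ ⟨w, hwn⟩)) ∈ (pairA ⟨w, hwn⟩).image σ :=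
      Finset.mem_image_of_mem σ (Finset.mem_insert_of_mem (Finset.mem_singleton_self _))
    have hmin : ((pairA (⟨w, hwn⟩ : Fin n)).image σ).min' (hpne.image σ) ≤ s.castSucc := by
      rcases hw3 with ⟨h1, _⟩ | ⟨h1, _⟩
      · refine le_trans (Finset.min'_le _ _ hc) ?_
        rw [Fin.le_def, Fin.coe_castSucc]
        omega
      · refine le_trans (Finset.min'_le _ _ hsu) ?_
        rw [Fin.le_def, Fin.coe_castSucc]
        omega
    have hmax : s.succ ≤ ((pairA (⟨w, hwn⟩ : Fin n)).image σ).max' (hpne.image σ) := by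
      rcases hw3 with ⟨_, h2⟩ | ⟨_, h2⟩
      · refine le_trans ?_ (Finset.le_max' _ _ hsu)
        rw [Fin.le_def, Fin.val_succ]
        omega
      · refine le_trans ?_ (Finset.le_max' _ _ hc)
        rw [Fin.le_def, Fin.val_succ]
        omega
    intro e he
    simp only [pairA, Finset.mem_insert, Finset.mem_singleton] at he
    have hcs : s.castSucc ≤ s.succ := le_of_lt (Fin.castSucc_lt_succ (i := s))
    rcases he with rfl | rfl
    · exact Finset.mem_Icc.mpr ⟨hmin, le_trans hcs hmax⟩
    · exact Finset.mem_Icc.mpr ⟨le_trans hmin hcs, hmax⟩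

lemma iter_interval {n : ℕ} (σ : Equiv.Perm (Fin (n + 1))) (i : Fin n) (m : ℕ) :
    ∃ a b : Fin (n + 1), a < b ∧ (convPerm σ)^[m] (pairA i) = Finset.Icc a b := by
  induction m with
  | zero => exact ⟨i.castSucc, i.succ, Fin.castSucc_lt_succ (i := i), pairA_eq_Icc i⟩
  | succ m ih =>
    obtain ⟨a, b, hab, heq⟩ := ih
    obtain ⟨a', b', hab', heq'⟩ := convPerm_Icc_spec σ hab
    exact ⟨a', b', hab', by rw [Function.iterate_succ_apply', heq, heq']⟩

lemma pairA_subset_pairA {n : ℕ} {s i : Fin n} (h : pairA s ⊆ pairA i) : s = i := by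
  have h1 := h (Finset.mem_insert_self _ _)
  have h2 := h (Finset.mem_insert_of_mem (Finset.mem_singleton_self _))
  simp only [pairA, Finset.mem_insert, Finset.mem_singleton, Fin.ext_iff,
    Fin.coe_castSucc, Fin.val_succ] at h1 h2
  exact Fin.ext (by omega)

lemma exists_path {n : ℕ} (σ : Equiv.Perm (Fin (n + 1))) (i : Fin n) :
    ∀ (m : ℕ) (s : Fin n), pairA s ⊆ (convPerm σ)^[m] (pairA i) →
      ∃ p : ℕ → Fin n, p 0 = i ∧ p m = s ∧
        ∀ j < m, pairA (p (j + 1)) ⊆ convPerm σ (pairA (p j)) := by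
  intro m
  induction m with
  | zero =>
    intro s hsub
    obtain rfl : s = i := pairA_subset_pairA hsub
    exact ⟨fun _ => s, rfl, rfl, fun j hj => absurd hj (by omega)⟩
  | succ m ih =>
    intro s hsub
    obtain ⟨a, b, hab, heq⟩ := iter_interval σ i m
    rw [Function.iterate_succ_apply', heq] at hsub
    obtain ⟨t, htI, hts⟩ := key_step σ (le_of_lt hab) s hsub
    rw [← heq] at htI
    obtain ⟨p, hp0, hpm, hpstep⟩ := ih t htI
    refine ⟨fun j => if j ≤ m then p j else s, by simp [hp0], by simp, ?_⟩
    intro j hj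
    rcases lt_or_eq_of_le (Nat.lt_succ_iff.mp hj) with hjm | hjm
    · simp only [if_pos (show j + 1 ≤ m from hjm), if_pos (Nat.le_of_lt hjm)]
      exact hpstep j hjm
    · subst hjm
      simpa [hpm] using hts

lemma subset_iter_of_path {n : ℕ} (σ : Equiv.Perm (Fin (n + 1))) (i : Fin n) (m : ℕ)
    (p : ℕ → Fin n) (hp0 : p 0 = i)
    (hstep : ∀ j < m, pairA (p (j + 1)) ⊆ convPerm σ (pairA (p j))) :
    ∀ j ≤ m, pairA (p j) ⊆ (convPerm σ)^[j] (pairA i) := by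
  intro j
  induction j with
  | zero => intro _; rw [hp0]; simp
  | succ j ih =>
    intro hjm
    rw [Function.iterate_succ_apply']
    exact (hstep j (by omega)).trans (convPerm_mono σ (ih (by omega)))

theorem charNum_eq_min_cycle_length' (n : ℕ) (σ : Equiv.Perm (Fin (n + 1))) (i : Fin n) :
    sInf {m : ℕ | 1 ≤ m ∧ pairA i ⊆ (convPerm σ)^[m] (pairA i)} =
      sInf {m : ℕ | 1 ≤ m ∧ ∃ p : ℕ → Fin n, p 0 = i ∧ p m = i ∧
        ∀ j < m, pairA (p (j + 1)) ⊆ convPerm σ (pairA (p j))} := by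
  congr 1
  ext m
  simp only [Set.mem_setOf_eq]
  constructor
  · rintro ⟨hm, hsub⟩
    obtain ⟨p, hp0, hpm, hstep⟩ := exists_path σ i m i hsub
    exact ⟨hm, p, hp0, hpm, hstep⟩
  · rintro ⟨hm, p, hp0, hpm, hstep⟩
    refine ⟨hm, ?_⟩
    have := subset_iter_of_path σ i m p hp0 hstep m le_rfl
    rwa [hpm] at this

/-- In the directed graph `Γ_σ` (edge `A_u → A_v` iff `convσ(A_u) ⊇ A_v`), the characteristic
number `m_i` equals the minimal length of a directed cycle through the vertex `A_i`. -/
theorem charNum_eq_min_cycle_length (n : ℕ) (hn : 1 ≤ n) (σ : Equiv.Perm (Fin (n + 1)))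
    (hσ : IsNCycle σ) (i : Fin n) :
    charNum σ i =
      sInf {m : ℕ | 1 ≤ m ∧ ∃ p : ℕ → Fin n, p 0 = i ∧ p m = i ∧
        ∀ j < m, pairA (p (j + 1)) ⊆ convPerm σ (pairA (p j))} := by
  exact charNum_eq_min_cycle_length' n σ i
end
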